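/- With r_x^k defined by r_x^0 = p and r_x^k = r_x(r_x^{k−1}) (the case w ≡ 1), for all k = 1, …, n one has ∫_a^b r_x^k(t) dt = (1/k!) ∫_a^b p(t)(t−x)^k dt. -/

import Mathlib

/-!
On each side of `x`, `r_x(q)` is a primitive of `∓q` vanishing at the endpoint `a`, resp. `b`.
Integrating by parts against `(s - x)^j`, whose antiderivative `(s - x)^(j+1) / (j+1)` vanishes
at `x`, therefore produces no boundary terms:
`∫_a^b r_x(q)(s) (s - x)^j ds = 1/(j+1) ∫_a^b q(s) (s - x)^(j+1) ds`.
Iterating this `k` times from `j = 0` gives the factor `1/k!`.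
-/

open MeasureTheory intervalIntegral

/-- The kernels `r_x^k` (case `w ≡ 1`): `r_x^0 = p` and
`r_x^{k+1}(s) = −∫_a^s r_x^k` for `s ≤ x`, `∫_s^b r_x^k` for `s ≥ x`. -/
noncomputable def rk (a b x : ℝ) (p : ℝ → ℝ) : ℕ → ℝ → ℝ
  | 0 => p
  | k + 1 => fun s =>
      if s ≤ x then -(∫ t in a..s, rk a b x p k t)
      else ∫ t in s..b, rk a b x p k t

open Set
open scoped Nat

theorem integral_primitive_mul_pow_sub {q : ℝ → ℝ} {a x : ℝ}
    (hq : IntervalIntegrable q volume a x) (j : ℕ) :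
    ∫ s in a..x, (∫ t in a..s, q t) * (s - x) ^ j
      = -(∫ s in a..x, q s * (s - x) ^ (j + 1)) / (j + 1) := by
  set W : ℝ → ℝ := fun s => (s - x) ^ (j + 1) / (j + 1)
  have hW : ∀ s, HasDerivAt W ((s - x) ^ j) s := fun s => by
    refine (((hasDerivAt_pow (j + 1) (s - x)).comp_sub_const s x).div_const _).congr_deriv ?_
    push_cast
    field_simp
  -- `q` is only integrable, so the primitive is merely absolutely continuous, with derivative
  -- `q` almost everywhere.
  have hQ := hq.absolutelyContinuousOnInterval_intervalIntegral (c := a) left_mem_uIcc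
  have hWac : AbsolutelyContinuousOnInterval W a x :=
    (show ContDiff ℝ 1 W by fun_prop).contDiffOn.absolutelyContinuousOnInterval
  have hderivQ : ∫ s in a..x, deriv (fun s => ∫ t in a..s, q t) s * W s
      = ∫ s in a..x, q s * W s := by
    refine integral_congr_ae ?_
    filter_upwards [hq.ae_hasDerivAt_integral] with s hs hsI
    rw [(hs (uIoc_subset_uIcc hsI) a left_mem_uIcc).deriv]
  have ibp := hQ.integral_mul_deriv_eq_deriv_mul hWac
  simp only [(hW _).deriv, hderivQ, integral_same, zero_mul, W, sub_self,
    ne_eq, add_eq_zero, one_ne_zero, and_false, not_false_eq_true, zero_pow, zero_div,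
    mul_zero] at ibp
  rw [ibp, neg_div, ← intervalIntegral.integral_div]
  simp only [mul_div_assoc, zero_sub]

theorem integral_primitive_from_right_mul_pow_sub {q : ℝ → ℝ} {x b : ℝ}
    (hq : IntervalIntegrable q volume x b) (j : ℕ) :
    ∫ s in x..b, (∫ t in s..b, q t) * (s - x) ^ j
      = (∫ s in x..b, q s * (s - x) ^ (j + 1)) / (j + 1) := by
  have := integral_primitive_mul_pow_sub hq.symm j
  simp only [integral_symm b, neg_mul, intervalIntegral.integral_neg] at this ⊢
  linarith

noncomputable def rx (a b x : ℝ) (q : ℝ → ℝ) (s : ℝ) : ℝ :=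
  if s ≤ x then -(∫ t in a..s, q t) else ∫ t in s..b, q t

theorem rk_succ (a b x : ℝ) (p : ℝ → ℝ) (k : ℕ) :
    rk a b x p (k + 1) = rx a b x (rk a b x p k) :=
  rfl

section
variable {a b x : ℝ} {p q : ℝ → ℝ}

theorem rx_eqOn_uIoo_left (hax : a ≤ x) :
    EqOn (fun s => -(∫ t in a..s, q t)) (rx a b x q) (uIoo a x) := by
  rw [uIoo_of_le hax]
  exact fun _ hs => (if_pos hs.2.le).symm

theorem rx_eqOn_uIoo_right (hxb : x ≤ b) :
    EqOn (fun s => ∫ t in s..b, q t) (rx a b x q) (uIoo x b) := by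
  rw [uIoo_of_le hxb]
  exact fun _ hs => (if_neg (not_le.2 hs.1)).symm

theorem intervalIntegrable_rx (hq : IntervalIntegrable q volume a b) (hx : x ∈ Icc a b) :
    IntervalIntegrable (rx a b x q) volume a b := by
  have hx' := Icc_subset_uIcc hx
  have hQ := (hq.mono_set (uIcc_subset_uIcc_left hx'))
    |>.absolutelyContinuousOnInterval_intervalIntegral left_mem_uIcc
  have hS := (hq.mono_set (uIcc_subset_uIcc_right hx'))
    |>.absolutelyContinuousOnInterval_intervalIntegral right_mem_uIcc
  have hleft : IntervalIntegrable (rx a b x q) volume a x :=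
    hQ.continuousOn.neg.intervalIntegrable.congr_uIoo (rx_eqOn_uIoo_left hx.1)
  have hright : IntervalIntegrable (rx a b x q) volume x b := by
    refine hS.continuousOn.neg.intervalIntegrable.congr_uIoo ?_
    simpa only [integral_symm b, Pi.neg_def] using rx_eqOn_uIoo_right hx.2
  exact hleft.trans hright

theorem integral_rx_mul_pow (hq : IntervalIntegrable q volume a b) (hx : x ∈ Icc a b) (j : ℕ) :
    ∫ s in a..b, rx a b x q s * (s - x) ^ j
      = (∫ s in a..b, q s * (s - x) ^ (j + 1)) / (j + 1) := by
  have hx' := Icc_subset_uIcc hx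
  have hr := intervalIntegrable_rx hq hx
  have hw (i : ℕ) : ContinuousOn (fun s : ℝ => (s - x) ^ i) (uIcc a b) := by fun_prop
  have hrw := hr.mul_continuousOn (hw j)
  have hqw := hq.mul_continuousOn (hw (j + 1))
  have hleft : ∫ s in a..x, rx a b x q s * (s - x) ^ j
      = (∫ s in a..x, q s * (s - x) ^ (j + 1)) / (j + 1) := by
    rw [← integral_congr_uIoo fun s hs =>
      congrArg (· * (s - x) ^ j) (rx_eqOn_uIoo_left hx.1 hs)]
    simp only [neg_mul, intervalIntegral.integral_neg,
      integral_primitive_mul_pow_sub (hq.mono_set (uIcc_subset_uIcc_left hx')), neg_div, neg_neg]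
  have hright : ∫ s in x..b, rx a b x q s * (s - x) ^ j
      = (∫ s in x..b, q s * (s - x) ^ (j + 1)) / (j + 1) := by
    rw [← integral_congr_uIoo fun s hs =>
      congrArg (· * (s - x) ^ j) (rx_eqOn_uIoo_right hx.2 hs)]
    exact integral_primitive_from_right_mul_pow_sub (hq.mono_set (uIcc_subset_uIcc_right hx')) j
  rw [← integral_add_adjacent_intervals (hrw.mono_set (uIcc_subset_uIcc_left hx'))
      (hrw.mono_set (uIcc_subset_uIcc_right hx')), hleft, hright, ← add_div,
    integral_add_adjacent_intervals (hqw.mono_set (uIcc_subset_uIcc_left hx'))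
      (hqw.mono_set (uIcc_subset_uIcc_right hx'))]


theorem intervalIntegrable_rk (hp : IntervalIntegrable p volume a b) (hx : x ∈ Icc a b)
    (k : ℕ) :
    IntervalIntegrable (rk a b x p k) volume a b := by
  induction k with
  | zero => exact hp
  | succ k ih => exact intervalIntegrable_rx ih hx

theorem integral_rk_mul_pow (hp : IntervalIntegrable p volume a b) (hx : x ∈ Icc a b)
    (k j : ℕ) :
    ∫ s in a..b, rk a b x p k s * (s - x) ^ j
      = (j ! / (j + k)! : ℝ) * ∫ s in a..b, p s * (s - x) ^ (j + k) := by
  induction k generalizing j with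
  | zero => simp [rk, (Nat.factorial_pos j).ne']
  | succ k ih =>
    rw [rk_succ, integral_rx_mul_pow (intervalIntegrable_rk hp hx k) hx, ih,
      show j + 1 + k = j + (k + 1) by ring, Nat.factorial_succ]
    push_cast
    field_simp

end

theorem stmt6_general (a b : ℝ)
    (p : ℝ → ℝ) (hp : IntervalIntegrable p volume a b)
    (x : ℝ) (hx : x ∈ Set.Icc a b) :
    ∀ k : ℕ, 1 ≤ k →
      (∫ t in a..b, rk a b x p k t)
        = (1 / (Nat.factorial k : ℝ)) * ∫ t in a..b, p t * (t - x) ^ k := by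
  intro k _
  simpa using integral_rk_mul_pow hp hx k 0

/-- For all `k ≥ 1`, `∫_a^b r_x^k(t) dt = (1/k!) ∫_a^b p(t)(t−x)^k dt`. -/
theorem stmt6 (a b : ℝ) (hab : a < b)
    (p : ℝ → ℝ) (hp : IntervalIntegrable p volume a b)
    (x : ℝ) (hx : x ∈ Set.Icc a b) :
    ∀ k : ℕ, 1 ≤ k →
      (∫ t in a..b, rk a b x p k t)
        = (1 / (Nat.factorial k : ℝ)) * ∫ t in a..b, p t * (t - x) ^ k :=
  stmt6_general a b p hp x hx
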